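/- Let H be a Hilbert space, P: H → H2 bounded linear with adjoint P*, g ∈ H2, and consider the linear ODE u'(t) = P*(g − P u(t)) with u(0) = u_ini. If PP* is invertible and P* P has an orthonormal eigenbasis decomposition, then u(t) converges as t → ∞ to P*(PP*)⁻¹(g − P u_ini) + u_ini. -/

import Mathlib

/-! The residual `g - P u` solves `r' = -(P Pᵀ) r` with `P Pᵀ` positive definite, so its
coordinates in an orthonormal eigenbasis of `P Pᵀ` decay exponentially and `P u(t) → g`.
The projection `1 - Pᵀ (P Pᵀ)⁻¹ P` annihilates the range of `Pᵀ`, which contains `u'`, so it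
maps `u(t)` to the constant `(1 - Pᵀ (P Pᵀ)⁻¹ P) u_ini`; hence
`u(t) = (1 - Pᵀ (P Pᵀ)⁻¹ P) u_ini + Pᵀ (P Pᵀ)⁻¹ P u(t)`, and the limit follows. -/

open Matrix Filter Topology

theorem HasDerivAt.matrix_mulVec {𝕜 : Type*} [NontriviallyNormedField 𝕜] {m n : Type*}
    [Fintype m] [Fintype n] (A : Matrix m n 𝕜) {r : 𝕜 → n → 𝕜} {r' : n → 𝕜} {t : 𝕜}
    (hr : HasDerivAt r r' t) : HasDerivAt (fun s => A *ᵥ r s) (A *ᵥ r') t :=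
  hasDerivAt_pi.2 fun i => HasDerivAt.fun_sum fun j _ => (hasDerivAt_pi.1 hr j).const_mul (A i j)

theorem mulVec_eq_of_mul_eq_zero_of_hasDerivAt {k m n : Type*} [Fintype k] [Fintype m]
    [Fintype n] {Q : Matrix k n ℝ} {A : Matrix n m ℝ} (hQA : Q * A = 0) {u : ℝ → n → ℝ}
    {v : ℝ → m → ℝ} (hu : ∀ t, HasDerivAt u (A *ᵥ v t) t) (t s : ℝ) :
    Q *ᵥ u t = Q *ᵥ u s := by
  have hQu : ∀ t, HasDerivAt (fun s => Q *ᵥ u s) 0 t := fun t => by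
    simpa [mulVec_mulVec, hQA] using (hu t).matrix_mulVec Q
  exact is_const_of_deriv_eq_zero (fun t => (hQu t).differentiableAt)
    (fun t => (hQu t).deriv) t s

theorem eq_exp_mul_of_hasDerivAt_eq_mul {c : ℝ} {a : ℝ → ℝ} (ha : ∀ t, HasDerivAt a (c * a t) t)
    (t : ℝ) : a t = Real.exp (c * t) * a 0 := by
  have hconst : ∀ t, HasDerivAt (fun s => Real.exp (s * -c) * a s) 0 t := fun t =>
    ((hasDerivAt_mul_const (-c)).exp.fun_mul (ha t)).congr_deriv (by ring)
  have := is_const_of_deriv_eq_zero (fun t => (hconst t).differentiableAt)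
    (fun t => (hconst t).deriv) t 0
  rw [zero_mul, Real.exp_zero, one_mul] at this
  calc a t = Real.exp (c * t) * (Real.exp (t * -c) * a t) := by
        rw [← mul_assoc, ← Real.exp_add, show c * t + t * -c = 0 by ring, Real.exp_zero, one_mul]
    _ = Real.exp (c * t) * a 0 := by rw [this]

theorem tendsto_zero_of_hasDerivAt_eq_neg_mul {c : ℝ} (hc : 0 < c) {a : ℝ → ℝ}
    (ha : ∀ t, HasDerivAt a (-c * a t) t) : Tendsto a atTop (𝓝 0) := by
  have hexp : Tendsto (fun t => Real.exp (-c * t)) atTop (𝓝 0) :=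
    Real.tendsto_exp_atBot.comp (tendsto_id.const_mul_atTop_of_neg (neg_neg_of_pos hc))
  rw [funext (eq_exp_mul_of_hasDerivAt_eq_mul ha)]
  simpa using hexp.mul_const (a 0)

theorem Matrix.PosDef.mul_transpose_self_of_isUnit {m n R : Type*} [Fintype m] [Fintype n]
    [DecidableEq m] [Field R] [PartialOrder R] [StarRing R] [StarOrderedRing R] [TrivialStar R]
    {P : Matrix m n R} (hP : IsUnit (P * Pᵀ)) : (P * Pᵀ).PosDef := by
  have hinj : Function.Injective ((· ᵥ* Pᵀ) ∘ (· ᵥ* P)) := by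
    simpa [Function.comp_def, vecMul_vecMul] using vecMul_injective_iff_isUnit.mpr hP
  simpa [conjTranspose_eq_transpose_of_trivial] using
    PosDef.mul_conjTranspose_self P hinj.of_comp

theorem Matrix.PosDef.tendsto_zero_of_hasDerivAt_eq_neg_mulVec {m : Type*} [Fintype m]
    [DecidableEq m] {A : Matrix m m ℝ} (hA : A.PosDef) {r : ℝ → m → ℝ}
    (hr : ∀ t, HasDerivAt r (-(A *ᵥ r t)) t) : Tendsto r atTop (𝓝 0) := by
  set U : Matrix m m ℝ := (hA.1.eigenvectorUnitary : Matrix m m ℝ)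
  have hUU : U * star U = 1 := Unitary.coe_mul_star_self _
  have hdiag : star U * A = diagonal hA.1.eigenvalues * star U := by
    have := hA.1.conjStarAlgAut_star_eigenvectorUnitary
    simp only [Unitary.conjStarAlgAut_apply, Unitary.coe_star, star_star,
      RCLike.ofReal_real_eq_id, Function.id_comp] at this
    rw [← this, mul_assoc _ U, hUU, mul_one]
  have hcoord : ∀ i, Tendsto (fun t => (star U *ᵥ r t) i) atTop (𝓝 0) := fun i =>
    tendsto_zero_of_hasDerivAt_eq_neg_mul (hA.eigenvalues_pos i) fun t => by
      have h := hasDerivAt_pi.1 ((hr t).matrix_mulVec (star U)) i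
      rwa [mulVec_neg, mulVec_mulVec, hdiag, ← mulVec_mulVec, Pi.neg_apply, mulVec_diagonal,
        ← neg_mul] at h
  have hs : Tendsto (fun t => star U *ᵥ r t) atTop (𝓝 0) := tendsto_pi_nhds.2 hcoord
  have hUs : r = fun t => U *ᵥ (star U *ᵥ r t) := by
    funext t; rw [mulVec_mulVec, hUU, one_mulVec]
  rw [hUs, ← mulVec_zero U]
  exact ((continuous_const.matrix_mulVec continuous_id).tendsto _).comp hs

/-- Finite-dimensional case: the gradient-flow ODE u' = Pᵀ(g − Pu), u(0) = u_ini,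
with P of full row rank (PPᵀ invertible), converges as t → ∞ to
Pᵀ(PPᵀ)⁻¹(g − P u_ini) + u_ini. -/
theorem stmt_5 {n M : ℕ}
    (P : Matrix (Fin M) (Fin n) ℝ)
    (hP : IsUnit (P * Pᵀ))
    (g : Fin M → ℝ) (uini : Fin n → ℝ)
    (u : ℝ → Fin n → ℝ)
    (hu0 : u 0 = uini)
    (hode : ∀ t : ℝ, HasDerivAt u (Pᵀ *ᵥ (g - P *ᵥ u t)) t) :
    Tendsto u atTop (nhds (Pᵀ *ᵥ ((P * Pᵀ)⁻¹ *ᵥ (g - P *ᵥ uini)) + uini)) := by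
  have hres : Tendsto (fun t => g - P *ᵥ u t) atTop (𝓝 0) :=
    (PosDef.mul_transpose_self_of_isUnit hP).tendsto_zero_of_hasDerivAt_eq_neg_mulVec fun t => by
      simpa [mulVec_mulVec] using ((hode t).matrix_mulVec P).const_sub g
  have hPu : Tendsto (fun t => P *ᵥ u t) atTop (𝓝 g) := by
    simpa using (tendsto_const_nhds (x := g)).sub hres
  set K := Pᵀ * (P * Pᵀ)⁻¹ with hK
  have hQ : (1 - K * P) * Pᵀ = 0 := by
    rw [Matrix.sub_mul, Matrix.one_mul, hK, Matrix.mul_assoc, Matrix.mul_assoc,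
      nonsing_inv_mul _ ((isUnit_iff_isUnit_det _).mp hP), Matrix.mul_one, sub_self]
  have hu : ∀ t, u t = (1 - K * P) *ᵥ uini + K *ᵥ (P *ᵥ u t) := fun t => by
    rw [← hu0, mulVec_eq_of_mul_eq_zero_of_hasDerivAt hQ hode 0 t, mulVec_mulVec, ← add_mulVec,
      sub_add_cancel, one_mulVec]
  have hlim : Pᵀ *ᵥ ((P * Pᵀ)⁻¹ *ᵥ (g - P *ᵥ uini)) + uini = (1 - K * P) *ᵥ uini + K *ᵥ g := by
    simp only [hK, sub_mulVec, one_mulVec, mulVec_sub, mulVec_mulVec, Matrix.mul_assoc]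
    abel
  rw [funext hu, hlim]
  exact tendsto_const_nhds.add (((continuous_const.matrix_mulVec continuous_id).tendsto g).comp hPu)
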